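/- arXiv:1406.3657 — 3 statements merged into one kernel-verified Lean document; each statement's English description precedes it below -/
import Mathlib

section
/- If (V, V₊) is a pre-ordered vector space with an order unit e, then N_V is uniformly closed; consequently N_V = I_V, the intersection of all uniformly closed order ideals. -/
/-!
Write `-u ≤ x ≤ u` for `x + u, u - x ∈ K`. Such bounds are stable under sums, under scalars of
absolute value at most one, and pass to elements squeezed between two bounded ones. Hence if
`n • x` is bounded by `y` for every `n`, so is `t • x` for every real `t`, which makes `N_V` an
order ideal; and since `y ≤ p • e`, the bound `y` may be replaced by the order unit `e` itself.
With this uniform bound, a `u`-uniform limit `x` of elements of `N_V` satisfies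
`-(e + u) ≤ m • x ≤ e + u` for all `m`. Conversely, if `-y ≤ n • x ≤ y` for all `n`, the constant
sequence `0` converges `y`-uniformly to `x` with rate `kₙ = n`, so `x` lies in every uniformly
closed order ideal.
-/

open Pointwise

variable {V : Type*} [AddCommGroup V] [Module ℝ V]

/-- A wedge: closed under addition and nonnegative scalar multiplication. -/
def Wedge (K : Set V) : Prop :=
  (∀ a ∈ K, ∀ b ∈ K, a + b ∈ K) ∧ (∀ r : ℝ, 0 ≤ r → ∀ a ∈ K, r • a ∈ K)

/-- A cone: a wedge with K ∩ (-K) = {0}. -/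
def IsCone (K : Set V) : Prop :=
  Wedge K ∧ ∀ a ∈ K, -a ∈ K → a = 0

/-- Archimedean wedge: x - n•y ∈ K for all n ∈ ℕ (n ≥ 1) implies -y ∈ K. -/
def ArchWedge (K : Set V) : Prop :=
  ∀ x y : V, (∀ n : ℕ, 0 < n → x - (n : ℝ) • y ∈ K) → -y ∈ K

/-- Almost Archimedean wedge: x - n•y ∈ K for all n ∈ ℤ implies y = 0. -/
def AlmostArchWedge (K : Set V) : Prop :=
  ∀ x y : V, (∀ n : ℤ, x - (n : ℝ) • y ∈ K) → y = 0

/-- N_V : the infinitely small elements: ∃ y, -y ≤ n•x ≤ y for all n ∈ ℕ. -/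
def infSmall (K : Set V) : Set V :=
  {x | ∃ y : V, ∀ n : ℕ, 0 < n → (n : ℝ) • x + y ∈ K ∧ y - (n : ℝ) • x ∈ K}

/-- D_V : elements x with n•x + ξ ∈ V₊ for some ξ ∈ V₊ and all n ∈ ℕ. -/
def Dset (K : Set V) : Set V :=
  {x | ∃ ξ ∈ K, ∀ n : ℕ, 0 < n → (n : ℝ) • x + ξ ∈ K}

/-- An order ideal w.r.t. the wedge K: an order convex vector subspace. -/
def OrderIdeal (K A : Set V) : Prop :=
  (0 : V) ∈ A ∧ (∀ a ∈ A, ∀ b ∈ A, a + b ∈ A) ∧ (∀ r : ℝ, ∀ a ∈ A, r • a ∈ A) ∧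
    (∀ a ∈ A, ∀ b ∈ A, ∀ z : V, z - a ∈ K → b - z ∈ K → z ∈ A)

/-- A is uniformly closed: it contains all u-uniform limits of its sequences. -/
def UnifClosed (K A : Set V) : Prop :=
  ∀ u ∈ K, ∀ (xs : ℕ → V) (x : V), (∀ n, xs n ∈ A) →
    (∃ k : ℕ → ℕ, Monotone k ∧ Filter.Tendsto k Filter.atTop Filter.atTop ∧
      ∀ n, (k n : ℝ) • (xs n - x) + u ∈ K ∧ u - (k n : ℝ) • (xs n - x) ∈ K) →
    x ∈ A

/-- Archimedean element of K. -/
def ArchElem (K : Set V) (x : V) : Prop :=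
  x ∈ K ∧ ∀ y : V, (∀ n : ℕ, 0 < n → x + (n : ℝ) • y ∈ K) → y ∈ K

variable {K : Set V}

namespace Wedge

theorem add_mem (hK : Wedge K) {a b : V} (ha : a ∈ K) (hb : b ∈ K) : a + b ∈ K :=
  hK.1 a ha b hb

theorem smul_mem (hK : Wedge K) {r : ℝ} (hr : 0 ≤ r) {a : V} (ha : a ∈ K) : r • a ∈ K :=
  hK.2 r hr a ha

theorem zero_mem (hK : Wedge K) (hne : K.Nonempty) : (0 : V) ∈ K := by
  obtain ⟨a, ha⟩ := hne
  simpa using hK.smul_mem le_rfl ha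

theorem of_smul_mem (hK : Wedge K) {c : ℝ} (hc : 0 < c) {a : V} (h : c • a ∈ K) : a ∈ K := by
  simpa [smul_smul, inv_mul_cancel₀ hc.ne'] using hK.smul_mem (inv_nonneg.2 hc.le) h

end Wedge

/-- `MemSymmIcc K u x` encodes `-u ≤ x ≤ u` for the preorder whose positive wedge is `K`. -/
def MemSymmIcc (K : Set V) (u x : V) : Prop :=
  x + u ∈ K ∧ u - x ∈ K

def IsOrderUnit (K : Set V) (e : V) : Prop :=
  ∀ x : V, ∃ n : ℕ, (n : ℝ) • e - x ∈ K

theorem IsOrderUnit.mem {e : V} (hW : Wedge K) (he : IsOrderUnit K e) : e ∈ K := by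
  obtain ⟨n, hn⟩ := he (-e)
  refine hW.of_smul_mem (c := n + 1) (by positivity) ?_
  convert hn using 1
  module

namespace MemSymmIcc

variable {u v x z : V}

omit [Module ℝ V] in
theorem zero (hu : u ∈ K) : MemSymmIcc K u 0 := by
  constructor <;> simpa using hu

omit [Module ℝ V] in
theorem neg (h : MemSymmIcc K u x) : MemSymmIcc K u (-x) :=
  ⟨by simpa [neg_add_eq_sub] using h.2, by simpa [add_comm] using h.1⟩

theorem add (hW : Wedge K) {y : V} (hx : MemSymmIcc K u x) (hy : MemSymmIcc K v y) :
    MemSymmIcc K (u + v) (x + y) := by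
  constructor
  · convert hW.add_mem hx.1 hy.1 using 1; abel
  · convert hW.add_mem hx.2 hy.2 using 1; abel

theorem bound_mem (hW : Wedge K) (h : MemSymmIcc K u x) : u ∈ K := by
  refine hW.of_smul_mem two_pos ?_
  convert hW.add_mem h.1 h.2 using 1
  module

theorem mono (hW : Wedge K) {u' : V} (huu' : u' - u ∈ K) (h : MemSymmIcc K u x) :
    MemSymmIcc K u' x := by
  constructor
  · convert hW.add_mem h.1 huu' using 1; abel
  · convert hW.add_mem h.2 huu' using 1; abel

theorem of_smul (hW : Wedge K) {c : ℝ} (hc : 0 < c) (h : MemSymmIcc K (c • u) (c • x)) :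
    MemSymmIcc K u x :=
  ⟨hW.of_smul_mem hc (by simpa [smul_add] using h.1),
    hW.of_smul_mem hc (by simpa [smul_sub] using h.2)⟩

theorem smul_of_mem_Icc (hW : Wedge K) (h : MemSymmIcc K u x) {s : ℝ} (hs : s ∈ Set.Icc 0 1) :
    MemSymmIcc K u (s • x) := by
  have hu := h.bound_mem hW
  have h1s : 0 ≤ 1 - s := sub_nonneg.2 hs.2
  constructor
  · convert hW.add_mem (hW.smul_mem hs.1 h.1) (hW.smul_mem h1s hu) using 1; module
  · convert hW.add_mem (hW.smul_mem hs.1 h.2) (hW.smul_mem h1s hu) using 1; module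

theorem smul_of_abs_le_one (hW : Wedge K) (h : MemSymmIcc K u x) {s : ℝ} (hs : |s| ≤ 1) :
    MemSymmIcc K u (s • x) := by
  rcases le_total 0 s with hs0 | hs0
  · exact h.smul_of_mem_Icc hW ⟨hs0, (le_abs_self s).trans hs⟩
  · simpa using (h.smul_of_mem_Icc hW ⟨neg_nonneg.2 hs0, (neg_le_abs s).trans hs⟩).neg

theorem of_le_of_le (hW : Wedge K) {a b : V} (hza : z - a ∈ K) (hbz : b - z ∈ K)
    (ha : MemSymmIcc K u a) (hb : MemSymmIcc K v b) : MemSymmIcc K (u + v) z := by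
  constructor
  · convert hW.add_mem (hW.add_mem hza ha.1) (hb.bound_mem hW) using 1; abel
  · convert hW.add_mem (hW.add_mem hbz hb.2) (ha.bound_mem hW) using 1; abel

end MemSymmIcc

theorem mem_infSmall_iff {x : V} :
    x ∈ infSmall K ↔ ∃ y, ∀ n : ℕ, 0 < n → MemSymmIcc K y ((n : ℝ) • x) :=
  Iff.rfl

theorem MemSymmIcc.real_smul_of_forall_nat_smul (hW : Wedge K) {x y : V}
    (h : ∀ n : ℕ, 0 < n → MemSymmIcc K y ((n : ℝ) • x)) (t : ℝ) : MemSymmIcc K y (t • x) := by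
  set n : ℕ := ⌈|t|⌉₊ + 1
  have hn : (0 : ℝ) < n := by positivity
  have hst : |t / n| ≤ 1 := by
    rw [abs_div, Nat.abs_cast, div_le_one hn]
    exact (Nat.le_ceil _).trans (by simp [n])
  simpa [smul_smul, div_mul_cancel₀ _ hn.ne'] using
    (h n (by positivity)).smul_of_abs_le_one hW hst

theorem orderIdeal_infSmall (hW : Wedge K) (hne : K.Nonempty) : OrderIdeal K (infSmall K) := by
  simp only [OrderIdeal, mem_infSmall_iff]
  refine ⟨⟨0, fun n _ => by simpa using MemSymmIcc.zero (hW.zero_mem hne)⟩, ?_, ?_, ?_⟩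
  · rintro a ⟨ya, hya⟩ b ⟨yb, hyb⟩
    exact ⟨ya + yb, fun n hn => by simpa [smul_add] using (hya n hn).add hW (hyb n hn)⟩
  · rintro r a ⟨y, hy⟩
    exact ⟨y, fun n _ => by
      simpa [smul_smul] using MemSymmIcc.real_smul_of_forall_nat_smul hW hy (n * r)⟩
  · rintro a ⟨ya, hya⟩ b ⟨yb, hyb⟩ z hza hbz
    refine ⟨ya + yb, fun n hn => ?_⟩
    have hn0 : (0 : ℝ) ≤ n := n.cast_nonneg
    exact MemSymmIcc.of_le_of_le hW (by simpa [smul_sub] using hW.smul_mem hn0 hza)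
      (by simpa [smul_sub] using hW.smul_mem hn0 hbz) (hya n hn) (hyb n hn)

theorem mem_infSmall_iff_of_isOrderUnit (hW : Wedge K) {e x : V} (he : IsOrderUnit K e) :
    x ∈ infSmall K ↔ ∀ n : ℕ, 0 < n → MemSymmIcc K e ((n : ℝ) • x) := by
  refine ⟨fun ⟨y, hy⟩ n _ => ?_, fun h => ⟨e, h⟩⟩
  obtain ⟨p, hp⟩ := he y
  have hc : (0 : ℝ) < p + 1 := by positivity
  have hye : ((p : ℝ) + 1) • e - y ∈ K := by
    convert hW.add_mem hp (he.mem hW) using 1; module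
  refine MemSymmIcc.of_smul hW hc ?_
  rw [smul_smul]
  exact (MemSymmIcc.real_smul_of_forall_nat_smul hW hy _).mono hW hye

theorem unifClosed_infSmall (hW : Wedge K) {e : V} (he : IsOrderUnit K e) :
    UnifClosed K (infSmall K) := by
  rintro u hu xs x hxs ⟨k, -, hk, hconv⟩
  refine ⟨e + u, fun m hm => ?_⟩
  obtain ⟨n, hn⟩ := (hk.eventually_ge_atTop m).exists
  have hkn : (0 : ℝ) < k n := by exact_mod_cast hm.trans_le hn
  have hdiff : MemSymmIcc K u ((m : ℝ) • (xs n - x)) := by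
    have hs : (m : ℝ) / k n ∈ Set.Icc 0 1 :=
      ⟨by positivity, (div_le_one hkn).2 (by exact_mod_cast hn)⟩
    simpa [smul_smul, div_mul_cancel₀ _ hkn.ne'] using
      (show MemSymmIcc K u ((k n : ℝ) • (xs n - x)) from hconv n).smul_of_mem_Icc hW hs
  have hsum := ((mem_infSmall_iff_of_isOrderUnit hW he).1 (hxs n) m hm).add hW hdiff.neg
  rwa [show (m : ℝ) • xs n + -((m : ℝ) • (xs n - x)) = (m : ℝ) • x by module] at hsum

theorem infSmall_subset_of_unifClosed (hW : Wedge K) {A : Set V} (hA0 : (0 : V) ∈ A)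
    (hA : UnifClosed K A) : infSmall K ⊆ A := by
  intro x hx
  obtain ⟨y, hy⟩ := mem_infSmall_iff.1 hx
  refine hA y ((hy 1 one_pos).bound_mem hW) (fun _ => 0) x (fun _ => hA0)
    ⟨id, monotone_id, Filter.tendsto_id, fun n => ?_⟩
  have hn := (MemSymmIcc.real_smul_of_forall_nat_smul hW hy n).neg
  rwa [show -((n : ℝ) • x) = (n : ℝ) • (0 - x) by simp] at hn

/-- with an order unit, N_V is uniformly closed and equals the
intersection I_V of all uniformly closed order ideals. -/
theorem stmt14 (K : Set V) (hW : Wedge K) (e : V)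
    (hunit : ∀ x : V, ∃ n : ℕ, (n : ℝ) • e - x ∈ K) :
    UnifClosed K (infSmall K) ∧
      infSmall K = ⋂₀ {A : Set V | OrderIdeal K A ∧ UnifClosed K A} := by
  have he : IsOrderUnit K e := hunit
  have hclosed := unifClosed_infSmall hW he
  refine ⟨hclosed, subset_antisymm ?_ <|
    Set.sInter_subset_of_mem ⟨orderIdeal_infSmall hW ⟨e, he.mem hW⟩, hclosed⟩⟩
  exact Set.subset_sInter fun A ⟨hideal, hAclosed⟩ =>
    infSmall_subset_of_unifClosed hW hideal.1 hAclosed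
end

section
/- If (V, V₊) is a Riesz space, then the quotient ordered vector space (V/N_V, D_V + N_V) is a Riesz space; in particular, for u, v ∈ V, the supremum of [u], [v] in V/N_V with respect to the cone D_V + N_V equals [u ∨ v]. -/
open Pointwise

variable {V : Type*} [AddCommGroup V] [Module ℝ V]

lemma zero_mem_of_cone {K : Set V} (hK : IsCone K)
    (hRiesz : ∀ a b : V, ∃ s : V, s - a ∈ K ∧ s - b ∈ K ∧
      ∀ t : V, t - a ∈ K → t - v ∈ K → t - s ∈ K) : True := trivial

lemma dplusn_sub (K : Set V) (hK : IsCone K) {x : V}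
    (hx : x ∈ Dset K + infSmall K) : x ∈ Dset K := by
  obtain ⟨d, hd, m, hm, hdm⟩ := Set.mem_add.mp hx
  obtain ⟨ξ, hξ, hn⟩ := hd
  obtain ⟨y, hy⟩ := hm
  have hy1 := hy 1 one_pos
  have hyK : y ∈ K := by
    have h2 := hK.1.1 _ hy1.1 _ hy1.2
    have h3 := hK.1.2 ((1:ℝ)/2) (by norm_num) _ h2
    have he : ((1:ℝ)/2) • ((((1:ℕ):ℝ) • m + y) + (y - ((1:ℕ):ℝ) • m)) = y := by
      push_cast; module
    rwa [he] at h3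
  refine ⟨ξ + y, hK.1.1 _ hξ _ hyK, fun n hn0 => ?_⟩
  have : ((n:ℝ) • d + ξ) + ((n:ℝ) • m + y) ∈ K :=
    hK.1.1 _ (hn n hn0) _ (hy n hn0).1
  have he : ((n:ℝ) • d + ξ) + ((n:ℝ) • m + y) = (n:ℝ) • x + (ξ + y) := by
    rw [← hdm]; module
  rwa [he] at this

lemma dset_sub_dplusn (K : Set V) (hK : IsCone K) (h0 : (0:V) ∈ K) {x : V}
    (hx : x ∈ Dset K) : x ∈ Dset K + infSmall K := by
  have hz : (0:V) ∈ infSmall K :=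
    ⟨0, fun n hn => by constructor <;> simpa using h0⟩
  exact Set.mem_add.mpr ⟨x, hx, 0, hz, add_zero x⟩

/-- if (V, V₊) is a Riesz space, then (V/N_V, D_V + N_V) is a
Riesz space: whenever w = u ∨ v in (V, V₊), the class [w] is the least upper
bound of [u], [v] in V/N_V with respect to the cone D_V + N_V. -/
theorem stmt15 (K : Set V) (hK : IsCone K)
    (hRiesz : ∀ a b : V, ∃ s : V, s - a ∈ K ∧ s - b ∈ K ∧
      ∀ t : V, t - a ∈ K → t - b ∈ K → t - s ∈ K) :
    ∀ u v w : V,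
      (w - u ∈ K ∧ w - v ∈ K ∧ ∀ t : V, t - u ∈ K → t - v ∈ K → t - w ∈ K) →
      (w - u ∈ Dset K + infSmall K ∧ w - v ∈ Dset K + infSmall K ∧
        ∀ z : V, z - u ∈ Dset K + infSmall K → z - v ∈ Dset K + infSmall K →
          z - w ∈ Dset K + infSmall K) := by
  have h0 : (0:V) ∈ K := by
    obtain ⟨s, hs, -, -⟩ := hRiesz 0 0
    have := hK.1.2 0 le_rfl _ hs
    simpa using this
  have kd : ∀ x : V, x ∈ K → x ∈ Dset K + infSmall K := by
    intro x hx
    exact dset_sub_dplusn K hK h0 ⟨x, hx, fun n hn =>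
      hK.1.1 _ (hK.1.2 _ (Nat.cast_nonneg n) _ hx) _ hx⟩
  rintro u v w ⟨hu, hv, hsup⟩
  refine ⟨kd _ hu, kd _ hv, fun z hz1 hz2 => ?_⟩
  obtain ⟨ξ₁, hξ₁, h1⟩ := dplusn_sub K hK hz1
  obtain ⟨ξ₂, hξ₂, h2⟩ := dplusn_sub K hK hz2
  refine dset_sub_dplusn K hK h0 ⟨ξ₁ + ξ₂, hK.1.1 _ hξ₁ _ hξ₂, fun n hn => ?_⟩
  have hnpos : (0:ℝ) < n := by exact_mod_cast hn
  set t : V := z + ((n:ℝ)⁻¹) • (ξ₁ + ξ₂) with ht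
  have htu : t - u ∈ K := by
    have : ((n:ℝ)⁻¹) • (((n:ℝ) • (z - u) + ξ₁) + ξ₂) ∈ K :=
      hK.1.2 _ (by positivity) _ (hK.1.1 _ (h1 n hn) _ hξ₂)
    have he : ((n:ℝ)⁻¹) • (((n:ℝ) • (z - u) + ξ₁) + ξ₂) = t - u := by
      rw [ht, smul_add, smul_add, smul_smul, inv_mul_cancel₀ hnpos.ne', one_smul]
      module
    rwa [he] at this
  have htv : t - v ∈ K := by
    have : ((n:ℝ)⁻¹) • (((n:ℝ) • (z - v) + ξ₂) + ξ₁) ∈ K :=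
      hK.1.2 _ (by positivity) _ (hK.1.1 _ (h2 n hn) _ hξ₁)
    have he : ((n:ℝ)⁻¹) • (((n:ℝ) • (z - v) + ξ₂) + ξ₁) = t - v := by
      rw [ht, smul_add, smul_add, smul_smul, inv_mul_cancel₀ hnpos.ne', one_smul]
      module
    rwa [he] at this
  have := hsup t htu htv
  have hf : (n:ℝ) • (t - w) = (n:ℝ) • (z - w) + (ξ₁ + ξ₂) := by
    rw [ht, smul_sub, smul_add, smul_smul, mul_inv_cancel₀ hnpos.ne', one_smul]
    module
  have := hK.1.2 _ hnpos.le _ this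
  rwa [hf] at this
end

section
/- Let A be an order ideal in a pre-ordered vector space (V, V₊). If the quotient V/A (with wedge V₊ + A) is almost Archimedean, then A is uniformly closed in V. -/
open Pointwise

variable {V : Type*} [AddCommGroup V] [Module ℝ V]

/-- if the quotient V/A by an order ideal A is almost
Archimedean, then A is uniformly closed. -/
theorem stmt16 (K : Set V) (hW : Wedge K) (A : Set V) (hA : OrderIdeal K A)
    (hAA : ∀ x y : V, (∀ n : ℤ, x - (n : ℝ) • y ∈ K + A) → y ∈ A) :
    UnifClosed K A := by
  intro u hu xs x hxs ⟨k, _, hktop, hk⟩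
  apply hAA u x
  intro m
  obtain ⟨n, hn⟩ := (hktop.eventually (Filter.eventually_ge_atTop (m.natAbs + 1))).exists
  have hc0 : 0 < (k n : ℝ) := by
    exact_mod_cast lt_of_lt_of_le (Nat.succ_pos _) hn
  have habs : |(m : ℝ)| ≤ (k n : ℝ) := by
    rw [← Int.cast_abs]
    have : |m| ≤ (k n : ℤ) := by
      rw [Int.abs_eq_natAbs]; exact_mod_cast le_trans (Nat.le_succ _) hn
    exact_mod_cast this
  obtain ⟨hm1, hm2⟩ := abs_le.mp habs
  set c : ℝ := (k n : ℝ) with hc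
  have h1 : c • (xs n - x) + u ∈ K := (hk n).1
  have h2 : u - c • (xs n - x) ∈ K := (hk n).2
  have hv : ((c + m) / (2 * c)) • (c • (xs n - x) + u)
      + ((c - m) / (2 * c)) • (u - c • (xs n - x)) ∈ K := by
    refine hW.1 _ (hW.2 _ ?_ _ h1) _ (hW.2 _ ?_ _ h2)
    · exact div_nonneg (by linarith) (by linarith)
    · exact div_nonneg (by linarith) (by linarith)
  refine Set.mem_add.mpr ⟨_, hv, (-(m : ℝ)) • xs n, hA.2.2.1 _ _ (hxs n), ?_⟩
  have hcne : c ≠ 0 := ne_of_gt hc0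
  match_scalars <;> field_simp <;> ring
end
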